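/- Let w be a word over {a,b} and x a letter. Then H_{wx} = H_w + 1 if wx is closed, and H_{wx} = H_w if wx is open. -/

import Mathlib

/-- The two-letter alphabet {a, b}. -/
inductive AB : Type
  | a : AB
  | b : AB
deriving DecidableEq, Repr

/-- A (finite) word over {a, b}. -/
abbrev Word := List AB

open AB

/-- `u` occurs in `w` at position `i`. -/
def OccursAt (u w : Word) (i : ℕ) : Prop :=
  i + u.length ≤ w.length ∧ (w.drop i).take u.length = u

/-- `u` occurs exactly once in `w` (is unrepeated in `w`). -/
def OccursOnce (u w : Word) : Prop := ∃! i, OccursAt u w i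

/-- `u` is a right special factor of `w`: both `ua` and `ub` are factors of `w`. -/
def IsRightSpecial (u w : Word) : Prop := (u ++ [a]) <:+: w ∧ (u ++ [b]) <:+: w

/-- `u` is a left special factor of `w`: both `au` and `bu` are factors of `w`. -/
def IsLeftSpecial (u w : Word) : Prop := ([a] ++ u) <:+: w ∧ ([b] ++ u) <:+: w

/-- `K w`: the length of the shortest unrepeated suffix of `w`. -/
noncomputable def Kp (w : Word) : ℕ := sInf {n | ∃ s : Word, s <:+ w ∧ s.length = n ∧ OccursOnce s w}

/-- `H w`: the length of the shortest unrepeated prefix of `w`. -/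
noncomputable def Hp (w : Word) : ℕ := sInf {n | ∃ p : Word, p <+: w ∧ p.length = n ∧ OccursOnce p w}

/-- `R w`: the smallest `n ≥ 0` such that `w` has no right special factor of length `n`. -/
noncomputable def Rp (w : Word) : ℕ := sInf {n | ∀ u : Word, u.length = n → ¬ IsRightSpecial u w}

/-- `L w`: the smallest `n ≥ 0` such that `w` has no left special factor of length `n`. -/
noncomputable def Lp (w : Word) : ℕ := sInf {n | ∀ u : Word, u.length = n → ¬ IsLeftSpecial u w}

/-- A word `w` is trapezoidal if `|w| = K w + R w`. -/
def IsTrapezoidal (w : Word) : Prop := w.length = Kp w + Rp w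

/-- A finite word over `{a,b}` is Sturmian iff it is balanced: there is no word `u`
with both `aua` and `bub` factors of `w`. -/
def IsSturmian (w : Word) : Prop :=
  ¬ ∃ u : Word, ([a] ++ u ++ [a]) <:+: w ∧ ([b] ++ u ++ [b]) <:+: w

/-- A nonempty word is closed if it has a border (a proper prefix which is also a suffix)
whose only occurrences in `w` are as a prefix and as a suffix. -/
def IsClosedWord (w : Word) : Prop :=
  w ≠ [] ∧ ∃ v : Word, v <+: w ∧ v.length < w.length ∧ v <:+ w ∧
    ∀ i : ℕ, OccursAt v w i → i = 0 ∨ i + v.length = w.length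

/-- A nonempty word is open if it is not closed. -/
def IsOpenWord (w : Word) : Prop := w ≠ [] ∧ ¬ IsClosedWord w

/-- Central words: `a^n`, `b^n`, or `u a b v = v b a u`. -/
def IsCentral (w : Word) : Prop :=
  (∃ n : ℕ, w = List.replicate n a) ∨ (∃ n : ℕ, w = List.replicate n b) ∨
  (∃ u v : Word, w = u ++ [a, b] ++ v ∧ w = v ++ [b, a] ++ u)

/-- The minimal period of `w`: `|w|` minus the length of the longest border of `w`. -/
noncomputable def minPeriod (w : Word) : ℕ :=
  w.length - sSup {n | ∃ v : Word, v.length = n ∧ v <+: w ∧ v ≠ w ∧ v <:+ w}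

/-! Let `p` be the shortest unrepeated prefix of `w`. Appending a letter `x` can create at most
one new occurrence of `p`, as a suffix of `wx`, and the prefix of `wx` of length `|p| + 1` is
always unrepeated, so `H_wx ∈ {H_w, H_w + 1}`. If `p` reoccurs as a suffix, it is a border of `wx`
without internal occurrences, so `wx` is closed. Conversely, a border of a closed `wx` is
unrepeated in `w`, so it has `p` as a prefix, and `p` reoccurs at the start of that suffix.
-/

section Occurrences

variable {u p q w v : Word} {i : ℕ}

lemma occursAt_zero_of_prefix (h : u <+: w) : OccursAt u w 0 := by
  refine ⟨by simpa using h.length_le, ?_⟩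
  simpa using (List.prefix_iff_eq_take.mp h).symm

lemma occursAt_of_suffix (h : u <:+ w) : OccursAt u w (w.length - u.length) := by
  refine ⟨by have := h.length_le; omega, ?_⟩
  rw [← List.suffix_iff_eq_drop.mp h]
  simp

lemma OccursAt.of_prefix (hpq : p <+: q) (h : OccursAt q w i) : OccursAt p w i := by
  obtain ⟨hlen, hocc⟩ := h
  have hpq_len := hpq.length_le
  refine ⟨by omega, ?_⟩
  conv_rhs => rw [List.prefix_iff_eq_take.mp hpq, ← hocc, List.take_take, min_eq_left hpq_len]

lemma OccursAt.append_right (h : OccursAt u w i) : OccursAt u (w ++ v) i := by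
  obtain ⟨hlen, hocc⟩ := h
  refine ⟨by simp only [List.length_append]; omega, ?_⟩
  rwa [List.drop_append_of_le_length (by omega),
    List.take_append_of_le_length (by simp only [List.length_drop]; omega)]

lemma OccursAt.of_append_right (h : OccursAt u (w ++ v) i) (hle : i + u.length ≤ w.length) :
    OccursAt u w i := by
  refine ⟨hle, ?_⟩
  have hocc := h.2
  rwa [List.drop_append_of_le_length (by omega),
    List.take_append_of_le_length (by simp only [List.length_drop]; omega)] at hocc

lemma OccursAt.suffix (h : OccursAt u w i) (hend : i + u.length = w.length) : u <:+ w := by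
  obtain ⟨hlen, hocc⟩ := h
  rw [List.take_of_length_le (by simp only [List.length_drop]; omega)] at hocc
  rw [List.suffix_iff_eq_drop, ← hocc, List.length_drop]
  congr 1
  omega

lemma occursOnce_self (w : Word) : OccursOnce w w :=
  ⟨0, occursAt_zero_of_prefix List.prefix_rfl, fun _ hi => by have := hi.1; omega⟩

lemma OccursOnce.eq_zero (hp : p <+: w) (ho : OccursOnce p w) (hi : OccursAt p w i) : i = 0 :=
  ho.unique hi (occursAt_zero_of_prefix hp)

lemma occursOnce_iff_of_prefix (hp : p <+: w) :
    OccursOnce p w ↔ ∀ i, OccursAt p w i → i = 0 :=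
  ⟨fun ho _ hi => ho.eq_zero hp hi, fun h => ⟨0, occursAt_zero_of_prefix hp, h⟩⟩

lemma OccursOnce.of_prefix_prefix (hpq : p <+: q) (hq : q <+: w) (hp : OccursOnce p w) :
    OccursOnce q w :=
  (occursOnce_iff_of_prefix hq).2 fun _ hi => hp.eq_zero (hpq.trans hq) (hi.of_prefix hpq)

lemma OccursOnce.of_append_right (hp : p <+: w) (ho : OccursOnce p (w ++ v)) : OccursOnce p w :=
  (occursOnce_iff_of_prefix hp).2 fun _ hi =>
    ho.eq_zero (hp.trans (List.prefix_append w v)) hi.append_right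

lemma OccursOnce.eq_zero_or_end {x : AB} (hp : p <+: w) (ho : OccursOnce p w)
    (hi : OccursAt p (w ++ [x]) i) : i = 0 ∨ i + p.length = w.length + 1 := by
  have hlen := hi.1
  simp only [List.length_append, List.length_singleton] at hlen
  by_cases hin : i + p.length ≤ w.length
  · exact Or.inl (ho.eq_zero hp (hi.of_append_right hin))
  · exact Or.inr (by omega)

end Occurrences

lemma Hp_le_iff (w : Word) (n : ℕ) : Hp w ≤ n ↔ OccursOnce (w.take n) w := by
  constructor
  · intro hn
    obtain ⟨p, hpw, hplen, hponce⟩ :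
        Hp w ∈ {n | ∃ p : Word, p <+: w ∧ p.length = n ∧ OccursOnce p w} :=
      Nat.sInf_mem ⟨_, w, List.prefix_rfl, rfl, occursOnce_self w⟩
    refine hponce.of_prefix_prefix ?_ (List.take_prefix n w)
    exact List.prefix_of_prefix_length_le hpw (List.take_prefix n w)
      (by simp only [List.length_take]; have := hpw.length_le; omega)
  · intro hn
    calc Hp w ≤ (w.take n).length := Nat.sInf_le ⟨_, List.take_prefix n w, rfl, hn⟩
      _ ≤ n := by simp only [List.length_take]; omega

lemma Hp_le_length (w : Word) : Hp w ≤ w.length :=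
  (Hp_le_iff w _).2 (by simpa using occursOnce_self w)

lemma occursOnce_take_Hp (w : Word) : OccursOnce (w.take (Hp w)) w :=
  (Hp_le_iff w _).1 le_rfl

lemma Hp_le_Hp_append (w v : Word) : Hp w ≤ Hp (w ++ v) := by
  rw [Hp_le_iff]
  by_cases hn : Hp (w ++ v) ≤ w.length
  · have ho := occursOnce_take_Hp (w ++ v)
    rw [List.take_append_of_le_length hn] at ho
    exact ho.of_append_right (List.take_prefix _ w)
  · rw [List.take_of_length_le (by omega)]
    exact occursOnce_self w

/-- The prefix of `w ++ v` of length `Hp w + |v|` is unrepeated, since any occurrence of it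
contains an occurrence of the unrepeated prefix of `w` lying inside `w`. -/
lemma Hp_append_le (w v : Word) : Hp (w ++ v) ≤ Hp w + v.length := by
  have hHp := Hp_le_length w
  set p := w.take (Hp w)
  have hp : p <+: w ++ v := (List.take_prefix _ w).trans (List.prefix_append w v)
  rw [Hp_le_iff, occursOnce_iff_of_prefix (List.take_prefix _ _)]
  intro i hi
  have hlen := hi.1
  simp only [List.length_take, List.length_append] at hlen
  have hpq : p <+: (w ++ v).take (Hp w + v.length) :=
    List.prefix_of_prefix_length_le hp (List.take_prefix _ _)
      (by simp only [p, List.length_take, List.length_append]; omega)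
  exact (occursOnce_take_Hp w).eq_zero (List.take_prefix _ w)
    ((hi.of_prefix hpq).of_append_right (by simp only [p, List.length_take]; omega))

section ClosedExtension

variable {w : Word} {x : AB}

lemma IsClosedWord.exists_border_occursOnce (hc : IsClosedWord (w ++ [x])) :
    ∃ v, v <+: w ∧ v <:+ w ++ [x] ∧ OccursOnce v w := by
  obtain ⟨-, v, hpre, hlen, hsuf, hends⟩ := hc
  simp only [List.length_append, List.length_singleton] at hlen
  have hvw : v <+: w := by
    rw [List.prefix_iff_eq_take] at hpre ⊢
    rwa [List.take_append_of_le_length (by omega)] at hpre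
  refine ⟨v, hvw, hsuf, (occursOnce_iff_of_prefix hvw).2 fun i hi => ?_⟩
  have := hi.1
  have := hends i hi.append_right
  simp only [List.length_append, List.length_singleton] at this
  omega

lemma Hp_lt_Hp_append_of_isClosedWord (hc : IsClosedWord (w ++ [x])) :
    Hp w < Hp (w ++ [x]) := by
  obtain ⟨v, hvw, hvsuf, hvonce⟩ := hc.exists_border_occursOnce
  have hvlen := hvw.length_le
  have hHv : Hp w ≤ v.length := by
    rw [Hp_le_iff, ← List.prefix_iff_eq_take.mp hvw]
    exact hvonce
  have hpv : w.take (Hp w) <+: v :=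
    List.prefix_of_prefix_length_le (List.take_prefix _ w) hvw
      (by simp only [List.length_take]; omega)
  rw [lt_iff_not_ge, Hp_le_iff, List.take_append_of_le_length (Hp_le_length w)]
  intro ho
  have := ho.eq_zero ((List.take_prefix _ w).trans (List.prefix_append w [x]))
    ((occursAt_of_suffix hvsuf).of_prefix hpv)
  simp only [List.length_append, List.length_singleton] at this
  omega

lemma isClosedWord_of_not_occursOnce_append {p : Word} (hp : p <+: w) (ho : OccursOnce p w)
    (hrep : ¬ OccursOnce p (w ++ [x])) : IsClosedWord (w ++ [x]) := by
  have hpx : p <+: w ++ [x] := hp.trans (List.prefix_append w [x])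
  obtain ⟨j, hj, hj0⟩ : ∃ j, OccursAt p (w ++ [x]) j ∧ j ≠ 0 := by
    simpa [occursOnce_iff_of_prefix hpx] using hrep
  have hjend := (ho.eq_zero_or_end hp hj).resolve_left hj0
  refine ⟨by simp, p, hpx, ?_, hj.suffix (by simpa using hjend), fun i hi => ?_⟩
  · simp only [List.length_append, List.length_singleton]; omega
  · simpa using ho.eq_zero_or_end hp hi

lemma Hp_append_le_of_not_isClosedWord (hopen : ¬ IsClosedWord (w ++ [x])) :
    Hp (w ++ [x]) ≤ Hp w := by
  rw [Hp_le_iff, List.take_append_of_le_length (Hp_le_length w)]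
  by_contra hrep
  exact hopen (isClosedWord_of_not_occursOnce_append (List.take_prefix _ w)
    (occursOnce_take_Hp w) hrep)

end ClosedExtension

/-- behavior of `H` under right extension. -/
theorem H_extension (w : Word) (x : AB) :
    (IsClosedWord (w ++ [x]) → Hp (w ++ [x]) = Hp w + 1) ∧
    (IsOpenWord (w ++ [x]) → Hp (w ++ [x]) = Hp w) := by
  have hle := Hp_append_le w [x]
  simp only [List.length_singleton] at hle
  refine ⟨fun hc => ?_, fun ho => ?_⟩
  · have := Hp_lt_Hp_append_of_isClosedWord hc
    omega
  · exact le_antisymm (Hp_append_le_of_not_isClosedWord ho.2) (Hp_le_Hp_append w [x])
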